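/- arXiv:2409.01834 — 2 statements merged into one kernel-verified Lean document; each statement's English description precedes it below -/
import Mathlib

section
/- If x solves Tx = βr where r is the indicator vector of a starting vertex s and T = βD + D^{-1}L, then any maximum of x occurs only at s, and x(s) < 1/d(s). -/
/-!
Multiplying the equation at `v` by `d v` gives the balance law
`∑ u, w u v * x u - d v * x v = β d(v) (d(v) x(v) - r(v))`, whose left side compares `x v` with
the `w`-weighted mean of `x`. At a minimum of `x` the left side is nonnegative, so `x ≥ 0`. At a
maximum `v ≠ s` it is nonpositive, forcing `x v ≤ 0`, hence `x ≡ 0`, which the equation at `s`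
rules out. If `d(s) x(s) ≥ 1`, the left side at the maximum `s` is both `≥ 0` and `≤ 0`, so every
neighbour of `s` is a maximum too; but `s` has a neighbour other than itself.
-/

open Finset

section WeightedSums

variable {ι : Type*} [Fintype ι] {c x : ι → ℝ} {M : ℝ}

theorem sum_mul_le_sum_mul_of_le (hc : ∀ u, 0 ≤ c u) (hx : ∀ u, x u ≤ M) :
    ∑ u, c u * x u ≤ (∑ u, c u) * M := by
  rw [sum_mul]
  exact sum_le_sum fun u _ => mul_le_mul_of_nonneg_left (hx u) (hc u)

theorem sum_mul_le_sum_mul_of_ge (hc : ∀ u, 0 ≤ c u) (hx : ∀ u, M ≤ x u) :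
    (∑ u, c u) * M ≤ ∑ u, c u * x u := by
  rw [sum_mul]
  exact sum_le_sum fun u _ => mul_le_mul_of_nonneg_left (hx u) (hc u)

theorem sum_mul_lt_sum_mul_of_le (hc : ∀ u, 0 ≤ c u) (hx : ∀ u, x u ≤ M) {i : ι}
    (hci : 0 < c i) (hxi : x i < M) : ∑ u, c u * x u < (∑ u, c u) * M := by
  rw [sum_mul]
  exact sum_lt_sum (fun u _ => mul_le_mul_of_nonneg_left (hx u) (hc u))
    ⟨i, mem_univ i, mul_lt_mul_of_pos_left hxi hci⟩

end WeightedSums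

section Balance

variable {ι : Type*} [Fintype ι] {w : ι → ι → ℝ} {d x r : ι → ℝ} {β : ℝ}

theorem nonneg_of_balance [Nonempty ι] (hw : ∀ u v, 0 ≤ w u v) (hcol : ∀ v, ∑ u, w u v = d v)
    (hd : ∀ v, 0 < d v) (hβ : 0 < β) (hr : ∀ v, 0 ≤ r v)
    (hbal : ∀ v, ∑ u, w u v * x u - d v * x v = β * d v * (d v * x v - r v)) (v : ι) :
    0 ≤ x v := by
  obtain ⟨m, hm⟩ := Finite.exists_min x
  have hmean : d m * x m ≤ ∑ u, w u m * x u := hcol m ▸ sum_mul_le_sum_mul_of_ge (hw · m) hm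
  have hdefect : 0 ≤ β * d m * (d m * x m - r m) := hbal m ▸ sub_nonneg.2 hmean
  have hrm : r m ≤ d m * x m :=
    sub_nonneg.1 (nonneg_of_mul_nonneg_right hdefect (mul_pos hβ (hd m)))
  exact (nonneg_of_mul_nonneg_right ((hr m).trans hrm) (hd m)).trans (hm v)

theorem pos_of_isMax_of_balance (hw : ∀ u v, 0 ≤ w u v) (hcol : ∀ v, ∑ u, w u v = d v)
    (hd : ∀ v, 0 < d v) (hβ : 0 < β) (hr : ∀ v, 0 ≤ r v)
    (hbal : ∀ v, ∑ u, w u v * x u - d v * x v = β * d v * (d v * x v - r v))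
    {s : ι} (hs : 0 < r s) {v : ι} (hv : ∀ u, x u ≤ x v) : 0 < r v := by
  have : Nonempty ι := ⟨s⟩
  by_contra! hrv
  have hmean : ∑ u, w u v * x u ≤ d v * x v := hcol v ▸ sum_mul_le_sum_mul_of_le (hw · v) hv
  have hdefect : β * d v * (d v * x v - r v) ≤ 0 := hbal v ▸ sub_nonpos.2 hmean
  rw [le_antisymm hrv (hr v), sub_zero] at hdefect
  have hxv : x v ≤ 0 :=
    nonpos_of_mul_nonpos_right (nonpos_of_mul_nonpos_right hdefect (mul_pos hβ (hd v))) (hd v)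
  have hzero : ∀ u, x u = 0 := fun u =>
    le_antisymm ((hv u).trans hxv) (nonneg_of_balance hw hcol hd hβ hr hbal u)
  have := hbal s
  simp only [hzero, mul_zero, sum_const_zero, sub_zero, zero_sub] at this
  linarith [mul_pos (mul_pos hβ (hd s)) hs]

theorem eq_of_isMax_of_balance (hw : ∀ u v, 0 ≤ w u v) (hcol : ∀ v, ∑ u, w u v = d v)
    (hd : ∀ v, 0 < d v) (hβ : 0 < β)
    (hbal : ∀ v, ∑ u, w u v * x u - d v * x v = β * d v * (d v * x v - r v))
    {v : ι} (hv : ∀ u, x u ≤ x v) (hrv : r v ≤ d v * x v) {u : ι} (hu : 0 < w u v) :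
    x u = x v := by
  by_contra hne
  have hmean : ∑ u, w u v * x u < d v * x v :=
    hcol v ▸ sum_mul_lt_sum_mul_of_le (hw · v) hv hu (lt_of_le_of_ne (hv u) hne)
  have hdefect : 0 ≤ β * d v * (d v * x v - r v) :=
    mul_nonneg (mul_pos hβ (hd v)).le (sub_nonneg.2 hrv)
  linarith [hbal v]

end Balance

/-- If `x` solves `Tx = βr` where `r` is the indicator of the starting vertex `s` and
`T = βD + D⁻¹L`, then any maximum of `x` occurs only at `s`, and `x s < 1/d s`.
The equation is written entrywise:
`(β d(v) + 1) x(v) - (1/d(v)) ∑_{u} w(u,v) x(u) = β r(v)`. -/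
theorem max_at_start {n : ℕ} (w : Fin n → Fin n → ℝ)
    (hsymm : ∀ u v, w u v = w v u) (hnonneg : ∀ u v, 0 ≤ w u v)
    (hloop : ∀ v, w v v = 0)
    (d : Fin n → ℝ) (hdeg : ∀ v, d v = ∑ u, w v u) (hd : ∀ v, 0 < d v)
    (β : ℝ) (hβ : 0 < β ∧ β < 1) (s : Fin n) (x : Fin n → ℝ)
    (hx : ∀ v, (β * d v + 1) * x v - (1 / d v) * ∑ u, w u v * x u =
      β * (if v = s then (1:ℝ) else 0)) :
    (∀ v, (∀ u, x u ≤ x v) → v = s) ∧ x s < 1 / d s := by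
  set r : Fin n → ℝ := fun v => if v = s then 1 else 0 with hr
  have hcol : ∀ v, ∑ u, w u v = d v := fun v => by
    rw [hdeg]; exact sum_congr rfl fun u _ => hsymm u v
  have hbal : ∀ v, ∑ u, w u v * x u - d v * x v = β * d v * (d v * x v - r v) := fun v => by
    have := hx v
    field_simp [(hd v).ne'] at this
    linear_combination -this
  have hmax : ∀ v, (∀ u, x u ≤ x v) → v = s := fun v hv => by
    by_contra hvs
    have := pos_of_isMax_of_balance hnonneg hcol hd hβ.1 (fun v => by positivity) hbal
      (by simp [hr] : 0 < r s) hv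
    simp [hr, hvs] at this
  refine ⟨hmax, ?_⟩
  have : Nonempty (Fin n) := ⟨s⟩
  obtain ⟨m, hm⟩ := Finite.exists_max x
  obtain rfl := hmax m hm
  obtain ⟨u, -, hu⟩ := exists_lt_of_sum_lt (by simpa [hcol] using hd m : ∑ u, (0 : ℝ) < ∑ u, w u m)
  rw [lt_div_iff₀ (hd m), mul_comm]
  by_contra! hxm
  have hxu := eq_of_isMax_of_balance hnonneg hcol hd hβ.1 hbal hm (by simpa [hr] using hxm) hu
  obtain rfl := hmax u (hxu ▸ hm)
  exact (hloop u ▸ hu).false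
end

section
/- For the Jacobian J = -TB†KB, where T is nonsingular, B is the incidence matrix of a connected graph on n vertices, and K is diagonal with strictly positive diagonal entries, the kernel of J equals the kernel of B; consequently rank(J) = n - 1. -/
/-!
Left multiplication by the invertible `T` does not change the kernel, so `ker J = ker (B† K B)`.
The Penrose identities give `Bᵀ B B† = Bᵀ`, i.e. `ker B† ⊆ ker Bᵀ`, so `B† K B x = 0` implies
`Bᵀ K B x = 0`; pairing with `x` yields `(Bx)ᵀ K (Bx) = 0`, and positive definiteness of `K`
forces `Bx = 0`. For a connected graph `ker B` is the line of constant vectors, and rank–nullity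
gives `rank J = n - 1`.
-/

open Matrix

namespace Matrix

variable {m n k R : Type*} [Fintype n]

theorem transpose_mul_mul_eq_transpose_of_penrose [Fintype m] [CommRing R] {B : Matrix m n R}
    {Bd : Matrix n m R} (h1 : B * Bd * B = B) (h3 : (B * Bd)ᵀ = B * Bd) :
    Bᵀ * B * Bd = Bᵀ := by
  conv_rhs => rw [← h1, transpose_mul, h3]
  exact Matrix.mul_assoc _ _ _

theorem transpose_mulVec_eq_zero_of_penrose [Fintype m] [CommRing R] {B : Matrix m n R}
    {Bd : Matrix n m R} (h1 : B * Bd * B = B) (h3 : (B * Bd)ᵀ = B * Bd) {v : m → R}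
    (hv : Bd *ᵥ v = 0) : Bᵀ *ᵥ v = 0 := by
  rw [← transpose_mul_mul_eq_transpose_of_penrose h1 h3, ← mulVec_mulVec, hv, mulVec_zero]

theorem PosDef.mulVec_eq_zero_of_conjTranspose_mul_mul_mulVec_eq_zero [Fintype m] [CommRing R]
    [PartialOrder R] [StarRing R] {A : Matrix m m R} (hA : A.PosDef) {B : Matrix m n R}
    {x : n → R} (h : (Bᴴ * A * B) *ᵥ x = 0) : B *ᵥ x = 0 := by
  by_contra hBx
  have hquad : star (B *ᵥ x) ⬝ᵥ (A *ᵥ (B *ᵥ x)) = star x ⬝ᵥ ((Bᴴ * A * B) *ᵥ x) := by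
    rw [star_mulVec, ← dotProduct_mulVec, mulVec_mulVec, mulVec_mulVec, Matrix.mul_assoc]
  exact (hA.dotProduct_mulVec_pos hBx).ne' (by rw [hquad, h, dotProduct_zero])

theorem ker_mulVecLin_neg [CommRing R] (M : Matrix m n R) :
    LinearMap.ker (-M).mulVecLin = LinearMap.ker M.mulVecLin := by
  ext x
  simp

theorem ker_mulVecLin_mul_of_isUnit_det [CommRing R] [DecidableEq n] [Fintype k]
    {T : Matrix n n R} (hT : IsUnit T.det) (M : Matrix n k R) :
    LinearMap.ker (T * M).mulVecLin = LinearMap.ker M.mulVecLin := by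
  rw [mulVecLin_mul]
  refine LinearMap.ker_comp_of_ker_eq_bot _ (LinearMap.ker_eq_bot.mpr fun x y hxy => ?_)
  simpa [mulVec_mulVec, nonsing_inv_mul T hT] using congrArg (T⁻¹ *ᵥ ·) hxy

theorem ker_mulVecLin_mul_posDef_mul_of_penrose [Fintype m] [CommRing R] [PartialOrder R]
    [StarRing R] [TrivialStar R] {B : Matrix m n R} {Bd : Matrix n m R} (h1 : B * Bd * B = B)
    (h3 : (B * Bd)ᵀ = B * Bd) {A : Matrix m m R} (hA : A.PosDef) :
    LinearMap.ker (Bd * A * B).mulVecLin = LinearMap.ker B.mulVecLin := by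
  ext x
  simp only [LinearMap.mem_ker, mulVecLin_apply]
  refine ⟨fun hx => hA.mulVec_eq_zero_of_conjTranspose_mul_mul_mulVec_eq_zero ?_, fun hx => ?_⟩
  · rw [conjTranspose_eq_transpose_of_trivial, Matrix.mul_assoc, ← mulVec_mulVec]
    exact transpose_mulVec_eq_zero_of_penrose h1 h3 (by rwa [mulVec_mulVec, ← Matrix.mul_assoc])
  · rw [← mulVec_mulVec, hx, mulVec_zero]

end Matrix

theorem SimpleGraph.Preconnected.eq_of_forall_adj {V α : Type*} {G : SimpleGraph V}
    (hG : G.Preconnected) {f : V → α} (hf : ∀ u v, G.Adj u v → f u = f v) (u v : V) :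
    f u = f v := by
  obtain ⟨w⟩ := hG u v
  induction w with
  | nil => rfl
  | cons h _ ih => exact (hf _ _ h).trans ih

variable {V E : Type*} [DecidableEq V]

def orientedIncMatrix (R : Type*) [Ring R] (o t : E → V) : Matrix E V R :=
  Matrix.of fun i j => if j = t i then 1 else if j = o i then -1 else 0

variable {R : Type*} [Fintype V]

theorem orientedIncMatrix_mulVec [Ring R] {o t : E → V} (hot : ∀ i, o i ≠ t i) (x : V → R) :
    orientedIncMatrix R o t *ᵥ x = fun i => x (t i) - x (o i) := by
  ext i
  have hrow : orientedIncMatrix R o t i = Pi.single (t i) 1 - Pi.single (o i) 1 := by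
    ext j
    by_cases hjt : j = t i
    · subst hjt; simp [orientedIncMatrix, Ne.symm (hot i)]
    · by_cases hjo : j = o i
      · subst hjo; simp [orientedIncMatrix, hot i]
      · simp [orientedIncMatrix, hjt, hjo]
  rw [mulVec, hrow, sub_dotProduct, single_one_dotProduct, single_one_dotProduct]

theorem orientedIncMatrix_mulVec_eq_zero_iff [Ring R] {o t : E → V} (hot : ∀ i, o i ≠ t i)
    {x : V → R} : orientedIncMatrix R o t *ᵥ x = 0 ↔ ∀ i, x (t i) = x (o i) := by
  simp only [orientedIncMatrix_mulVec hot, funext_iff, Pi.zero_apply, sub_eq_zero]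

theorem ker_mulVecLin_orientedIncMatrix [CommRing R] {G : SimpleGraph V} (hG : G.Connected)
    {o t : E → V} (hot : ∀ i, o i ≠ t i)
    (hadj : ∀ u v, G.Adj u v → ∃ i, (o i = u ∧ t i = v) ∨ (o i = v ∧ t i = u)) :
    LinearMap.ker (orientedIncMatrix R o t).mulVecLin = R ∙ 1 := by
  ext x
  rw [LinearMap.mem_ker, Matrix.mulVecLin_apply, orientedIncMatrix_mulVec_eq_zero_iff hot,
    Submodule.mem_span_singleton]
  refine ⟨fun hx => ?_, ?_⟩
  · have hconst := hG.preconnected.eq_of_forall_adj (f := x) fun u v huv => by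
      obtain ⟨i, ⟨rfl, rfl⟩ | ⟨rfl, rfl⟩⟩ := hadj u v huv
      exacts [(hx i).symm, hx i]
    obtain ⟨v₀⟩ := hG.nonempty
    exact ⟨x v₀, funext fun v => by simp [hconst v₀ v]⟩
  · rintro ⟨a, rfl⟩ i
    simp

theorem jacobian_kernel_rank_general {n m : ℕ} (G : SimpleGraph (Fin n)) (hG : G.Connected)
    (o t : Fin m → Fin n)
    (hedge : ∀ u v, G.Adj u v ↔ ∃ i, (o i = u ∧ t i = v) ∨ (o i = v ∧ t i = u))
    (B : Matrix (Fin m) (Fin n) ℝ)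
    (hB : ∀ i j, B i j = if j = t i then 1 else if j = o i then -1 else 0)
    (Bd : Matrix (Fin n) (Fin m) ℝ)
    (h1 : B * Bd * B = B)
    (h3 : (B * Bd).transpose = B * Bd)
    (κ : Fin m → ℝ) (hκ : ∀ i, 0 < κ i)
    (T : Matrix (Fin n) (Fin n) ℝ) (hT : IsUnit T.det)
    (J : Matrix (Fin n) (Fin n) ℝ)
    (hJ : J = -(T * Bd * Matrix.diagonal κ * B)) :
    LinearMap.ker J.mulVecLin = LinearMap.ker B.mulVecLin ∧ J.rank = n - 1 := by
  have hot : ∀ i, o i ≠ t i := fun i hi =>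
    G.loopless.irrefl _ ((hedge _ _).2 ⟨i, .inl ⟨hi, rfl⟩⟩)
  have hker : LinearMap.ker J.mulVecLin = LinearMap.ker B.mulVecLin := by
    rw [hJ, ker_mulVecLin_neg, Matrix.mul_assoc, Matrix.mul_assoc,
      ker_mulVecLin_mul_of_isUnit_det hT, ← Matrix.mul_assoc,
      ker_mulVecLin_mul_posDef_mul_of_penrose h1 h3 (PosDef.diagonal hκ)]
  have hkerB : LinearMap.ker B.mulVecLin = ℝ ∙ 1 := by
    rw [show B = orientedIncMatrix ℝ o t from Matrix.ext hB]
    exact ker_mulVecLin_orientedIncMatrix hG hot fun u v => (hedge u v).1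
  have : Nonempty (Fin n) := hG.nonempty
  have hrank := J.mulVecLin.finrank_range_add_finrank_ker
  rw [hker, hkerB, finrank_span_singleton one_ne_zero, Module.finrank_fin_fun] at hrank
  exact ⟨hker, by rw [rank]; omega⟩

/-- For the Jacobian `J = -T B† K B`, where `T` is nonsingular, `B` is the oriented
incidence matrix of a connected graph on `n` vertices, `B†` its Moore-Penrose inverse,
and `K` is diagonal with strictly positive diagonal entries, the kernel of `J` equals
the kernel of `B`; consequently `rank J = n - 1`. -/
theorem jacobian_kernel_rank {n m : ℕ} (G : SimpleGraph (Fin n)) (hG : G.Connected)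
    (o t : Fin m → Fin n)
    (hedge : ∀ u v, G.Adj u v ↔ ∃ i, (o i = u ∧ t i = v) ∨ (o i = v ∧ t i = u))
    (B : Matrix (Fin m) (Fin n) ℝ)
    (hB : ∀ i j, B i j = if j = t i then 1 else if j = o i then -1 else 0)
    (Bd : Matrix (Fin n) (Fin m) ℝ)
    (h1 : B * Bd * B = B) (h2 : Bd * B * Bd = Bd)
    (h3 : (B * Bd).transpose = B * Bd) (h4 : (Bd * B).transpose = Bd * B)
    (κ : Fin m → ℝ) (hκ : ∀ i, 0 < κ i)
    (T : Matrix (Fin n) (Fin n) ℝ) (hT : IsUnit T.det)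
    (J : Matrix (Fin n) (Fin n) ℝ)
    (hJ : J = -(T * Bd * Matrix.diagonal κ * B)) :
    LinearMap.ker J.mulVecLin = LinearMap.ker B.mulVecLin ∧ J.rank = n - 1 :=
  jacobian_kernel_rank_general G hG o t hedge B hB Bd h1 h3 κ hκ T hT J hJ
end
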